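/- For every n ∈ ℕ and every g ∈ SL(2,ℂ), χ^n(g) = Σ_{r=0}^{⌊n/2⌋} (−1)^r · C(n−r, r) · (tr g)^{n−2r}, where C(m,k) denotes the binomial coefficient. -/
import Mathlib


open Matrix Finset

noncomputable section

abbrev SL2 : Type := Matrix.SpecialLinearGroup (Fin 2) ℂ

/-- Matrix entry of the representation ρₙ on Vₙ in the basis `n_k = X^k Y^{n-k}`:
`rhoFun n g l k` is the coefficient of `X^l Y^{n-l}` in
`(g₁₁ X + g₂₁ Y)^k (g₁₂ X + g₂₂ Y)^{n-k}`. -/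
def rhoFun (n : ℕ) (g : SL2) (l k : ℕ) : ℂ :=
  MvPolynomial.coeff (Finsupp.single (0 : Fin 2) l + Finsupp.single (1 : Fin 2) (n - l))
    (MvPolynomial.aeval
      ![MvPolynomial.C (g.1 0 0) * MvPolynomial.X (0 : Fin 2) +
          MvPolynomial.C (g.1 1 0) * MvPolynomial.X 1,
        MvPolynomial.C (g.1 0 1) * MvPolynomial.X 0 +
          MvPolynomial.C (g.1 1 1) * MvPolynomial.X 1]
      ((MvPolynomial.X (0 : Fin 2) : MvPolynomial (Fin 2) ℂ) ^ k * MvPolynomial.X 1 ^ (n - k)))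

/-- The matrix of ρₙ(g) acting on coordinates with respect to the basis `n_k`. -/
def rhoMat (n : ℕ) (g : SL2) : Matrix (Fin (n+1)) (Fin (n+1)) ℂ :=
  Matrix.of fun l k => rhoFun n g (l : ℕ) (k : ℕ)

/-- The character `χⁿ(g) = tr ρₙ(g)`. -/
def chi (n : ℕ) (g : SL2) : ℂ := Matrix.trace (rhoMat n g)

/-! ### Auxiliary development -/

open MvPolynomial

def c2 (p q r : ℕ) : ℕ := (p+r).choose r * ((q+r).choose r)

def Lfun (a d e : ℂ) (n : ℕ) : ℂ :=
  ∑ p ∈ range (n+1), ∑ q ∈ range (n+1), ∑ r ∈ range (n+1),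
    if p + q + 2*r = n then (c2 p q r : ℂ) * a^p * d^q * e^r else 0

def Sfun (t : ℂ) (n : ℕ) : ℂ :=
  ∑ j ∈ range (n+1), (-1 : ℂ)^j * ((n-j).choose j : ℂ) * t^(n-2*j)

lemma tri_ext (f : ℕ → ℕ → ℕ → ℂ) (n N : ℕ) (h : n < N)
    (hf : ∀ p q r, n < p ∨ n < q ∨ n < r → f p q r = 0) :
    (∑ p ∈ range (n+1), ∑ q ∈ range (n+1), ∑ r ∈ range (n+1), f p q r)
      = ∑ p ∈ range N, ∑ q ∈ range N, ∑ r ∈ range N, f p q r := by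
  have hsub : range (n+1) ⊆ range N := Finset.range_subset_range.2 h
  have e1 : ∀ p q, (∑ r ∈ range (n+1), f p q r) = ∑ r ∈ range N, f p q r := fun p q =>
    Finset.sum_subset hsub (fun r _ hr => hf p q r (by simp at hr; omega))
  have e2 : ∀ p, (∑ q ∈ range (n+1), ∑ r ∈ range (n+1), f p q r)
      = ∑ q ∈ range N, ∑ r ∈ range N, f p q r := by
    intro p
    rw [Finset.sum_congr rfl (fun q _ => e1 p q)]
    exact Finset.sum_subset hsub (fun q _ hq =>
      Finset.sum_eq_zero fun r _ => hf p q r (by simp at hq; omega))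
  rw [Finset.sum_congr rfl (fun p _ => e2 p)]
  exact Finset.sum_subset hsub (fun p _ hp =>
    Finset.sum_eq_zero fun q _ => Finset.sum_eq_zero fun r _ => hf p q r (by simp at hp; omega))

lemma shift_sum {M : ℕ} (f : ℕ → ℂ) (h0 : f 0 = 0) (hM : f M = 0) :
    ∑ x ∈ range M, f (x+1) = ∑ x ∈ range M, f x := by
  have h1 := Finset.sum_range_succ' f M
  have h2 := Finset.sum_range_succ f M
  rw [h0, add_zero] at h1
  rw [hM, add_zero] at h2
  rw [← h1, h2]

lemma shift3_p (N : ℕ) (F : ℕ → ℕ → ℕ → ℂ)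
    (h0 : ∀ q r, F 0 q r = 0) (hN : ∀ q r, F N q r = 0) :
    (∑ p ∈ range N, ∑ q ∈ range N, ∑ r ∈ range N, F p q r)
      = ∑ p ∈ range N, ∑ q ∈ range N, ∑ r ∈ range N, F (p+1) q r :=
  (shift_sum (fun p => ∑ q ∈ range N, ∑ r ∈ range N, F p q r)
    (by simp [h0]) (by simp [hN])).symm

lemma shift3_q (N : ℕ) (F : ℕ → ℕ → ℕ → ℂ)
    (h0 : ∀ p r, F p 0 r = 0) (hN : ∀ p r, F p N r = 0) :
    (∑ p ∈ range N, ∑ q ∈ range N, ∑ r ∈ range N, F p q r)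
      = ∑ p ∈ range N, ∑ q ∈ range N, ∑ r ∈ range N, F p (q+1) r :=
  Finset.sum_congr rfl fun p _ =>
    (shift_sum (fun q => ∑ r ∈ range N, F p q r) (by simp [h0]) (by simp [hN])).symm

lemma shift3_r (N : ℕ) (F : ℕ → ℕ → ℕ → ℂ)
    (h0 : ∀ p q, F p q 0 = 0) (hN : ∀ p q, F p q N = 0) :
    (∑ p ∈ range N, ∑ q ∈ range N, ∑ r ∈ range N, F p q r)
      = ∑ p ∈ range N, ∑ q ∈ range N, ∑ r ∈ range N, F p q (r+1) :=
  Finset.sum_congr rfl fun p _ => Finset.sum_congr rfl fun q _ =>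
    (shift_sum (fun r => F p q r) (h0 p q) (hN p q)).symm

lemma c2_key (p q r : ℕ) :
    c2 (p+1) (q+1) (r+1) + c2 p q (r+1)
      = c2 p (q+1) (r+1) + c2 (p+1) q (r+1) + c2 (p+1) (q+1) r := by
  simp only [c2]
  have hp : (p+1+(r+1)).choose (r+1) = (p+(r+1)).choose (r+1) + (p+1+r).choose r := by
    rw [show p+1+(r+1) = (p+(r+1))+1 by omega, Nat.choose_succ_succ]
    rw [show p+(r+1) = p+1+r by omega]
    simp only [Nat.succ_eq_add_one]
    omega
  have hq : (q+1+(r+1)).choose (r+1) = (q+(r+1)).choose (r+1) + (q+1+r).choose r := by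
    rw [show q+1+(r+1) = (q+(r+1))+1 by omega, Nat.choose_succ_succ]
    rw [show q+(r+1) = q+1+r by omega]
    simp only [Nat.succ_eq_add_one]
    omega
  rw [hp, hq]; ring

lemma c2_0q (q r : ℕ) : c2 0 (q+1) (r+1) = c2 0 q (r+1) + c2 0 (q+1) r := by
  simp only [c2, Nat.zero_add, Nat.choose_self, one_mul]
  rw [show q+1+(r+1) = (q+(r+1))+1 by omega, Nat.choose_succ_succ]
  rw [show q+(r+1) = q+1+r by omega]
  simp only [Nat.succ_eq_add_one]
  omega

lemma c2_p0 (p r : ℕ) : c2 (p+1) 0 (r+1) = c2 p 0 (r+1) + c2 (p+1) 0 r := by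
  simp only [c2, Nat.zero_add, Nat.choose_self, mul_one]
  rw [show p+1+(r+1) = (p+(r+1))+1 by omega, Nat.choose_succ_succ]
  rw [show p+(r+1) = p+1+r by omega]
  simp only [Nat.succ_eq_add_one]
  omega

lemma c2_r0 (p q : ℕ) : c2 p q 0 = 1 := by simp [c2]

lemma c2_00 (r : ℕ) : c2 0 0 r = 1 := by simp [c2]

lemma Lfun_rec (a d e : ℂ) (n : ℕ) :
    Lfun a d e (n+2) + a*d*(Lfun a d e n) = (a+d) * Lfun a d e (n+1) + e * Lfun a d e n := by
  set N := n+4 with hN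
  have hvan : ∀ (m : ℕ), ∀ p q r, m < p ∨ m < q ∨ m < r →
      (if p + q + 2*r = m then (c2 p q r : ℂ) * a^p * d^q * e^r else 0) = 0 := by
    intro m p q r h
    exact if_neg (by omega)
  have hLn : Lfun a d e n
      = ∑ p ∈ range N, ∑ q ∈ range N, ∑ r ∈ range N,
          (if p + q + 2*r = n then (c2 p q r : ℂ) * a^p * d^q * e^r else 0) :=
    tri_ext _ n N (by omega) (hvan n)
  have hLn1 : Lfun a d e (n+1)
      = ∑ p ∈ range N, ∑ q ∈ range N, ∑ r ∈ range N,
          (if p + q + 2*r = n+1 then (c2 p q r : ℂ) * a^p * d^q * e^r else 0) :=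
    tri_ext _ (n+1) N (by omega) (hvan (n+1))
  have hLn2 : Lfun a d e (n+2)
      = ∑ p ∈ range N, ∑ q ∈ range N, ∑ r ∈ range N,
          (if p + q + 2*r = n+2 then (c2 p q r : ℂ) * a^p * d^q * e^r else 0) :=
    tri_ext _ (n+2) N (by omega) (hvan (n+2))
  -- the four shifted pieces
  have hA : (∑ p ∈ range N, ∑ q ∈ range N, ∑ r ∈ range N,
      (if 1 ≤ p ∧ p+q+2*r = n+2 then (c2 (p-1) q r : ℂ) * a^p * d^q * e^r else 0))
      = a * Lfun a d e (n+1) := by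
    rw [shift3_p N _ (fun q r => if_neg (by omega)) (fun q r => if_neg (by omega))]
    rw [hLn1, Finset.mul_sum]
    refine Finset.sum_congr rfl fun p _ => ?_
    rw [Finset.mul_sum]
    refine Finset.sum_congr rfl fun q _ => ?_
    rw [Finset.mul_sum]
    refine Finset.sum_congr rfl fun r _ => ?_
    by_cases h : p + q + 2*r = n+1
    · rw [if_pos ⟨by omega, by omega⟩, if_pos h, Nat.add_sub_cancel, pow_succ]
      ring
    · rw [if_neg (by omega), if_neg h, mul_zero]
  have hD : (∑ p ∈ range N, ∑ q ∈ range N, ∑ r ∈ range N,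
      (if 1 ≤ q ∧ p+q+2*r = n+2 then (c2 p (q-1) r : ℂ) * a^p * d^q * e^r else 0))
      = d * Lfun a d e (n+1) := by
    rw [shift3_q N _ (fun p r => if_neg (by omega)) (fun p r => if_neg (by omega))]
    rw [hLn1, Finset.mul_sum]
    refine Finset.sum_congr rfl fun p _ => ?_
    rw [Finset.mul_sum]
    refine Finset.sum_congr rfl fun q _ => ?_
    rw [Finset.mul_sum]
    refine Finset.sum_congr rfl fun r _ => ?_
    by_cases h : p + q + 2*r = n+1
    · rw [if_pos ⟨by omega, by omega⟩, if_pos h, Nat.add_sub_cancel, pow_succ]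
      ring
    · rw [if_neg (by omega), if_neg h, mul_zero]
  have hE : (∑ p ∈ range N, ∑ q ∈ range N, ∑ r ∈ range N,
      (if 1 ≤ r ∧ p+q+2*r = n+2 then (c2 p q (r-1) : ℂ) * a^p * d^q * e^r else 0))
      = e * Lfun a d e n := by
    rw [shift3_r N _ (fun p q => if_neg (by omega)) (fun p q => if_neg (by omega))]
    rw [hLn, Finset.mul_sum]
    refine Finset.sum_congr rfl fun p _ => ?_
    rw [Finset.mul_sum]
    refine Finset.sum_congr rfl fun q _ => ?_
    rw [Finset.mul_sum]
    refine Finset.sum_congr rfl fun r _ => ?_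
    by_cases h : p + q + 2*r = n
    · rw [if_pos ⟨by omega, by omega⟩, if_pos h, Nat.add_sub_cancel, pow_succ]
      ring
    · rw [if_neg (by omega), if_neg h, mul_zero]
  have hAD : (∑ p ∈ range N, ∑ q ∈ range N, ∑ r ∈ range N,
      (if 1 ≤ p ∧ 1 ≤ q ∧ p+q+2*r = n+2 then (c2 (p-1) (q-1) r : ℂ) * a^p * d^q * e^r else 0))
      = a * d * Lfun a d e n := by
    rw [shift3_p N _ (fun q r => if_neg (by omega)) (fun q r => if_neg (by omega))]
    rw [shift3_q N _ (fun p r => if_neg (by omega)) (fun p r => if_neg (by omega))]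
    rw [hLn, Finset.mul_sum]
    refine Finset.sum_congr rfl fun p _ => ?_
    rw [Finset.mul_sum]
    refine Finset.sum_congr rfl fun q _ => ?_
    rw [Finset.mul_sum]
    refine Finset.sum_congr rfl fun r _ => ?_
    by_cases h : p + q + 2*r = n
    · rw [if_pos ⟨by omega, by omega, by omega⟩, if_pos h, Nat.add_sub_cancel,
        Nat.add_sub_cancel, pow_succ, pow_succ]
      ring
    · rw [if_neg (by omega), if_neg h, mul_zero]
  -- assemble
  rw [add_mul, ← hA, ← hD, ← hE, ← hAD, hLn2]
  rw [← Finset.sum_add_distrib, ← Finset.sum_add_distrib, ← Finset.sum_add_distrib]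
  refine Finset.sum_congr rfl fun p _ => ?_
  rw [← Finset.sum_add_distrib, ← Finset.sum_add_distrib, ← Finset.sum_add_distrib]
  refine Finset.sum_congr rfl fun q _ => ?_
  rw [← Finset.sum_add_distrib, ← Finset.sum_add_distrib, ← Finset.sum_add_distrib]
  refine Finset.sum_congr rfl fun r _ => ?_
  by_cases hc : p + q + 2*r = n+2
  · rcases p with _ | p <;> rcases q with _ | q <;> rcases r with _ | r
    · exfalso; omega
    · -- 0 0 r+1
      split_ifs <;> try (exfalso; omega)
      simp only [Nat.add_sub_cancel, c2_00]
      ring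
    · -- 0 q+1 0
      split_ifs <;> try (exfalso; omega)
      simp only [Nat.add_sub_cancel, c2_r0]
      ring
    · -- 0 q+1 r+1
      split_ifs <;> try (exfalso; omega)
      simp only [Nat.add_sub_cancel]
      have h2 : ((c2 0 (q+1) (r+1) : ℕ) : ℂ) = (c2 0 q (r+1) : ℕ) + ((c2 0 (q+1) r : ℕ) : ℂ) := by
        exact_mod_cast c2_0q q r
      rw [h2]; ring
    · -- p+1 0 0
      split_ifs <;> try (exfalso; omega)
      simp only [Nat.add_sub_cancel, c2_r0]
      ring
    · -- p+1 0 r+1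
      split_ifs <;> try (exfalso; omega)
      simp only [Nat.add_sub_cancel]
      have h2 : ((c2 (p+1) 0 (r+1) : ℕ) : ℂ) = (c2 p 0 (r+1) : ℕ) + ((c2 (p+1) 0 r : ℕ) : ℂ) := by
        exact_mod_cast c2_p0 p r
      rw [h2]; ring
    · -- p+1 q+1 0
      split_ifs <;> try (exfalso; omega)
      simp only [Nat.add_sub_cancel, c2_r0]
      ring
    · -- p+1 q+1 r+1
      split_ifs <;> try (exfalso; omega)
      simp only [Nat.add_sub_cancel]
      have h2 : ((c2 (p+1) (q+1) (r+1) : ℕ) : ℂ) + ((c2 p q (r+1) : ℕ) : ℂ)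
          = ((c2 p (q+1) (r+1) : ℕ) : ℂ) + (c2 (p+1) q (r+1) : ℕ) + ((c2 (p+1) (q+1) r : ℕ) : ℂ) := by
        exact_mod_cast c2_key p q r
      linear_combination h2 * (a^(p+1) * d^(q+1) * e^(r+1))
  · simp [hc]

lemma Sfun_rec (t : ℂ) (n : ℕ) :
    Sfun t (n+2) = t * Sfun t (n+1) - Sfun t n := by
  set R : ℂ := ∑ j ∈ range (n+1), (-1:ℂ)^j * ((n-j).choose (j+1) : ℂ) * t^(n-2*j) with hR
  have hleft : Sfun t (n+2) = t^(n+2) - Sfun t n - R := by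
    rw [Sfun, Finset.sum_range_succ' _ (n+2)]
    have hterm : ∀ j ∈ range (n+2), (-1:ℂ)^(j+1) * ((n+2-(j+1)).choose (j+1) : ℂ) * t^(n+2-2*(j+1))
        = -((-1:ℂ)^j * ((n-j).choose j : ℂ) * t^(n-2*j))
          - (-1:ℂ)^j * ((n-j).choose (j+1) : ℂ) * t^(n-2*j) := by
      intro j hj
      simp only [mem_range] at hj
      have hexp : n+2-2*(j+1) = n-2*j := by omega
      rcases Nat.lt_or_ge j (n+1) with h | h
      · have h2 : n+2-(j+1) = (n-j)+1 := by omega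
        rw [h2, hexp, Nat.choose_succ_succ]
        push_cast
        ring
      · have hj' : j = n+1 := by omega
        subst hj'
        have h1 : n-(n+1) = 0 := by omega
        rw [show n+2-(n+1+1) = 0 by omega, h1, hexp]
        rw [Nat.choose_eq_zero_of_lt (show (0:ℕ) < n+1+1 by omega),
          Nat.choose_eq_zero_of_lt (show (0:ℕ) < n+1 by omega)]
        push_cast; ring
    rw [Finset.sum_congr rfl hterm]
    have hsplit : ∑ j ∈ range (n+2),
        (-((-1:ℂ)^j * ((n-j).choose j : ℂ) * t^(n-2*j))
          - (-1:ℂ)^j * ((n-j).choose (j+1) : ℂ) * t^(n-2*j))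
        = -(∑ j ∈ range (n+2), (-1:ℂ)^j * ((n-j).choose j : ℂ) * t^(n-2*j))
          - ∑ j ∈ range (n+2), (-1:ℂ)^j * ((n-j).choose (j+1) : ℂ) * t^(n-2*j) := by
      rw [Finset.sum_sub_distrib, Finset.sum_neg_distrib]
    rw [hsplit]
    rw [Finset.sum_range_succ _ (n+1), Finset.sum_range_succ _ (n+1)]
    have z1 : ((n-(n+1)).choose (n+1) : ℂ) = 0 := by
      rw [Nat.choose_eq_zero_of_lt (by omega)]; norm_num
    have z2 : ((n-(n+1)).choose (n+1+1) : ℂ) = 0 := by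
      rw [Nat.choose_eq_zero_of_lt (by omega)]; norm_num
    rw [z1, z2, ← Sfun, ← hR]
    simp
    ring
  have hright : t * Sfun t (n+1) = t^(n+2) - R := by
    rw [Sfun, Finset.mul_sum, Finset.sum_range_succ' _ (n+1)]
    have hterm : ∀ j ∈ range (n+1), t * ((-1:ℂ)^(j+1) * ((n+1-(j+1)).choose (j+1) : ℂ) * t^(n+1-2*(j+1)))
        = -((-1:ℂ)^j * ((n-j).choose (j+1) : ℂ) * t^(n-2*j)) := by
      intro j hj
      simp only [mem_range] at hj
      have h2 : n+1-(j+1) = n-j := by omega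
      rw [h2]
      rcases Nat.lt_or_ge (2*j) n with h | h
      · have hexp : n-2*j = (n+1-2*(j+1)) + 1 := by omega
        rw [hexp, pow_succ]
        ring
      · rw [Nat.choose_eq_zero_of_lt (by omega)]
        push_cast; ring
    rw [Finset.sum_congr rfl hterm]
    rw [Finset.sum_neg_distrib, ← hR]
    simp
    ring
  rw [hleft, hright]
  ring

lemma single_eq_single_iff (x y x' y' : ℕ) :
    (Finsupp.single (0 : Fin 2) x + Finsupp.single (1 : Fin 2) y
      = Finsupp.single (0 : Fin 2) x' + Finsupp.single (1 : Fin 2) y') ↔ (x = x' ∧ y = y') := by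
  constructor
  · intro h
    constructor
    · have := DFunLike.congr_fun h (0 : Fin 2); simpa using this
    · have := DFunLike.congr_fun h (1 : Fin 2); simpa using this
  · rintro ⟨rfl, rfl⟩; rfl

lemma pow_mul_pow_eq_monomial (α γ : ℂ) (i i' : ℕ) :
    (C α * X (0 : Fin 2))^i * (C γ * X 1)^i'
      = monomial (Finsupp.single 0 i + Finsupp.single 1 i') (α^i * γ^i') := by
  rw [mul_pow, mul_pow, ← C_pow, ← C_pow, X_pow_eq_monomial, X_pow_eq_monomial,
    C_mul_monomial, C_mul_monomial, monomial_mul]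
  ring_nf

lemma rhoFun_diag (n : ℕ) (g : SL2) (k : ℕ) (hk : k ≤ n) :
    rhoFun n g k k = ∑ i ∈ range (k+1),
      if k - i ≤ n - k then
        (k.choose i : ℂ) * ((n-k).choose (k-i) : ℂ) * (g.1 0 0)^i * (g.1 1 0)^(k-i)
          * (g.1 0 1)^(k-i) * (g.1 1 1)^(n-k-(k-i))
      else 0 := by
  set a := g.1 0 0
  set c := g.1 1 0
  set b := g.1 0 1
  set d := g.1 1 1
  have haev : (MvPolynomial.aeval
      ![C a * X (0:Fin 2) + C c * X 1, C b * X 0 + C d * X 1]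
      ((X (0 : Fin 2) : MvPolynomial (Fin 2) ℂ) ^ k * X 1 ^ (n - k)))
      = (C a * X (0:Fin 2) + C c * X 1)^k * (C b * X 0 + C d * X 1)^(n-k) := by
    simp [_root_.map_mul, map_pow]
  rw [rhoFun, haev, add_pow, add_pow, Finset.sum_mul_sum]
  rw [MvPolynomial.coeff_sum]
  rw [Finset.sum_congr rfl (fun i hi => MvPolynomial.coeff_sum _ _ _)]
  have hterm : ∀ i ∈ range (k+1), ∀ j ∈ range (n-k+1),
      MvPolynomial.coeff (Finsupp.single (0:Fin 2) k + Finsupp.single 1 (n-k))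
        ((C a * X (0:Fin 2))^i * (C c * X 1)^(k-i) * (k.choose i : MvPolynomial (Fin 2) ℂ)
          * ((C b * X (0:Fin 2))^j * (C d * X 1)^(n-k-j) * ((n-k).choose j : MvPolynomial (Fin 2) ℂ)))
      = if j = k - i then
          (k.choose i : ℂ) * ((n-k).choose j : ℂ) * a^i * c^(k-i) * b^j * d^(n-k-j)
        else 0 := by
    intro i hi j hj
    simp only [mem_range] at hi hj
    rw [show ((k.choose i : MvPolynomial (Fin 2) ℂ)) = C (k.choose i : ℂ) from (map_natCast C _).symm,
      show (((n-k).choose j : MvPolynomial (Fin 2) ℂ)) = C ((n-k).choose j : ℂ) from (map_natCast C _).symm]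
    rw [pow_mul_pow_eq_monomial, pow_mul_pow_eq_monomial]
    rw [mul_comm (monomial _ _) (C ((k.choose i : ℂ))), C_mul_monomial]
    rw [mul_comm (monomial _ _) (C (((n-k).choose j : ℂ))), C_mul_monomial]
    rw [monomial_mul, MvPolynomial.coeff_monomial]
    rw [show (Finsupp.single (0:Fin 2) i + Finsupp.single 1 (k-i)
        + (Finsupp.single 0 j + Finsupp.single 1 (n-k-j)))
      = (Finsupp.single (0:Fin 2) (i+j) + Finsupp.single 1 ((k-i)+(n-k-j))) by
        rw [Finsupp.single_add, Finsupp.single_add]; abel]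
    simp only [single_eq_single_iff]
    by_cases h : j = k - i
    · rw [if_pos (by constructor <;> omega), if_pos h]
      ring
    · rw [if_neg (by omega), if_neg h]
  rw [Finset.sum_congr rfl (fun i hi => Finset.sum_congr rfl (fun j hj => hterm i hi j hj))]
  refine Finset.sum_congr rfl fun i hi => ?_
  simp only [mem_range] at hi
  rw [Finset.sum_ite_eq' (range (n-k+1)) (k-i)
    (fun j => (k.choose i : ℂ) * ((n-k).choose j : ℂ) * a^i * c^(k-i) * b^j * d^(n-k-j))]
  by_cases h : k - i ≤ n - k
  · rw [if_pos (by simp; omega), if_pos h]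
  · rw [if_neg (by simp; omega), if_neg h]

lemma chi_eq_Lfun (n : ℕ) (g : SL2) :
    chi n g = Lfun (g.1 0 0) (g.1 1 1) (g.1 0 1 * g.1 1 0) n := by
  set a := g.1 0 0
  set c := g.1 1 0
  set b := g.1 0 1
  set d := g.1 1 1
  have htr : chi n g = ∑ k ∈ range (n+1), rhoFun n g k k := by
    rw [chi, Matrix.trace]
    simp only [Matrix.diag, rhoMat, Matrix.of_apply]
    exact Fin.sum_univ_eq_sum_range (fun k => rhoFun n g k k) (n+1)
  rw [htr, Finset.sum_congr rfl (fun k hk => rhoFun_diag n g k (by simp at hk; omega))]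
  have hinner : ∀ k ∈ range (n+1),
      (∑ i ∈ range (k+1), if k - i ≤ n - k then
        (k.choose i : ℂ) * ((n-k).choose (k-i) : ℂ) * a^i * c^(k-i) * b^(k-i) * d^(n-k-(k-i))
        else 0)
      = ∑ i ∈ range (n+1), if i ≤ k ∧ k - i ≤ n - k then
          (k.choose i : ℂ) * ((n-k).choose (k-i) : ℂ) * a^i * c^(k-i) * b^(k-i) * d^(n-k-(k-i))
        else 0 := by
    intro k hk
    simp only [mem_range] at hk
    rw [show range (k+1) = (range (n+1)).filter (fun i => i ≤ k) by ext x; simp; omega]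
    rw [Finset.sum_filter]
    refine Finset.sum_congr rfl fun i _ => ?_
    by_cases h : i ≤ k
    · by_cases h2 : k - i ≤ n - k
      · rw [if_pos h, if_pos h2, if_pos ⟨h, h2⟩]
      · rw [if_pos h, if_neg h2, if_neg (by omega)]
    · rw [if_neg h, if_neg (by omega)]
  rw [Finset.sum_congr rfl hinner]
  have hLHS : (∑ k ∈ range (n+1), ∑ i ∈ range (n+1),
      if i ≤ k ∧ k - i ≤ n - k then
          (k.choose i : ℂ) * ((n-k).choose (k-i) : ℂ) * a^i * c^(k-i) * b^(k-i) * d^(n-k-(k-i))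
        else 0)
      = ∑ x ∈ ((range (n+1) ×ˢ range (n+1)).filter (fun x => x.2 ≤ x.1 ∧ x.1 - x.2 ≤ n - x.1)),
          (x.1.choose x.2 : ℂ) * ((n-x.1).choose (x.1-x.2) : ℂ) * a^x.2 * c^(x.1-x.2)
            * b^(x.1-x.2) * d^(n-x.1-(x.1-x.2)) := by
    rw [Finset.sum_filter, ← Finset.sum_product' (range (n+1)) (range (n+1))
      (fun (k i : ℕ) => if i ≤ k ∧ k - i ≤ n - k then
          (k.choose i : ℂ) * ((n-k).choose (k-i) : ℂ) * a^i * c^(k-i) * b^(k-i) * d^(n-k-(k-i))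
        else 0)]
  have hRHS : Lfun a d (b*c) n
      = ∑ y ∈ ((range (n+1) ×ˢ (range (n+1) ×ˢ range (n+1))).filter
            (fun y => y.1 + y.2.1 + 2*y.2.2 = n)),
          (c2 y.1 y.2.1 y.2.2 : ℂ) * a^y.1 * d^y.2.1 * (b*c)^y.2.2 := by
    rw [Lfun]
    rw [Finset.sum_congr rfl (fun p _ => (Finset.sum_product' (range (n+1)) (range (n+1))
      (fun (q r : ℕ) =>
      if p + q + 2*r = n then (c2 p q r : ℂ) * a^p * d^q * (b*c)^r else 0)).symm)]
    rw [← Finset.sum_product' (range (n+1)) (range (n+1) ×ˢ range (n+1))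
      (fun (p : ℕ) (y : ℕ × ℕ) =>
      if p + y.1 + 2*y.2 = n then (c2 p y.1 y.2 : ℂ) * a^p * d^y.1 * (b*c)^y.2 else 0)]
    rw [Finset.sum_filter]
  rw [hLHS, hRHS]
  refine Finset.sum_nbij' (i := fun x => (x.2, (n - x.1 - (x.1 - x.2), x.1 - x.2)))
    (j := fun y => (y.1 + y.2.2, y.1)) ?_ ?_ ?_ ?_ ?_
  · rintro ⟨k, i⟩ hx
    simp only [mem_filter, mem_product, mem_range] at hx ⊢
    exact ⟨⟨by omega, by omega, by omega⟩, by omega⟩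
  · rintro ⟨p, q, r⟩ hy
    simp only [mem_filter, mem_product, mem_range] at hy ⊢
    exact ⟨⟨by omega, by omega⟩, by omega⟩
  · rintro ⟨k, i⟩ hx
    simp only [mem_filter, mem_product, mem_range] at hx
    simp only [Prod.ext_iff, and_true, true_and]
    omega
  · rintro ⟨p, q, r⟩ hy
    simp only [mem_filter, mem_product, mem_range] at hy
    simp only [Prod.ext_iff, and_true, true_and]
    omega
  · rintro ⟨k, i⟩ hx
    simp only [mem_filter, mem_product, mem_range] at hx
    obtain ⟨⟨hk, hi⟩, hik, hkn⟩ := hx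
    simp only [c2]
    rw [show i + (k - i) = k by omega,
      show n - k - (k - i) + (k - i) = n - k by omega,
      Nat.choose_symm hik]
    push_cast
    rw [mul_pow]
    ring

lemma Lfun_eq_Sfun (a d e : ℂ) (h : a*d - e = 1) (n : ℕ) : Lfun a d e n = Sfun (a+d) n := by
  induction n using Nat.twoStepInduction with
  | zero => simp [Lfun, Sfun, c2]
  | one =>
    rw [Lfun, Sfun]
    simp [Finset.sum_range_succ, c2]
    ring
  | more n ih1 ih2 =>
    rw [Sfun_rec, ← ih1, ← ih2]
    linear_combination Lfun_rec a d e n - Lfun a d e n * h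

lemma Sfun_eq (t : ℂ) (n : ℕ) :
    Sfun t n = ∑ r ∈ range (n/2+1), (-1:ℂ)^r * ((n-r).choose r : ℂ) * t^(n-2*r) := by
  rw [Sfun]
  symm
  apply Finset.sum_subset (Finset.range_subset_range.2 (by omega))
  intro j hj hj2
  simp only [mem_range] at hj hj2
  rw [Nat.choose_eq_zero_of_lt (by omega)]
  push_cast
  ring

/-- The closed formula `χⁿ(g) = Σ_{r=0}^{⌊n/2⌋} (−1)^r C(n−r, r) (tr g)^{n−2r}`. -/
theorem chi_eq_poly_in_trace (n : ℕ) (g : SL2) :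
    chi n g = ∑ r ∈ Finset.range (n / 2 + 1),
      (-1 : ℂ) ^ r * ((n - r).choose r : ℂ) *
        (Matrix.trace (g : Matrix (Fin 2) (Fin 2) ℂ)) ^ (n - 2 * r) := by
  rw [chi_eq_Lfun]
  have hdet : g.1 0 0 * g.1 1 1 - g.1 0 1 * g.1 1 0 = 1 := by
    have h2 := g.2
    rw [Matrix.det_fin_two] at h2
    exact h2
  rw [Lfun_eq_Sfun _ _ _ hdet, Matrix.trace_fin_two]
  exact Sfun_eq _ n

end
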